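/- arXiv:2006.03197 — 6 statements merged into one kernel-verified Lean document; each statement's English description precedes it below -/
import Mathlib

section
/- For (m,a), (n,b) ∈ P ⋊ ℕ×, the set (m + aP) ∩ (n + bP) is nonempty if and only if gcd(a,b) divides m - n. -/
def Pset : Set ℕ := {n | n = 0 ∨ 2 ≤ n}

/-! By Bézout, `gcd(a,b) ∣ m - n` means `m + a x = n + b y` for some integers `x, y`. Such a
solution can be moved along `(x, y) ↦ (x + t b, y + t a)`, which makes both coefficients at
least `2`, hence elements of `P`. -/

theorem gcd_dvd_sub_iff_exists_add_mul_eq {R : Type*} [CommRing R] [IsDomain R] [IsBezout R]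
    [GCDMonoid R] (a b m n : R) :
    gcd a b ∣ m - n ↔ ∃ x y, m + a * x = n + b * y := by
  rw [gcd_dvd_iff_exists]
  constructor
  · rintro ⟨x, y, h⟩
    exact ⟨-x, y, by linear_combination h⟩
  · rintro ⟨x, y, h⟩
    exact ⟨-x, y, by linear_combination h⟩

theorem Int.exists_le_add_mul_eq_add_mul {a b m n x y : ℤ} (ha : 0 < a) (hb : 0 < b)
    (h : m + a * x = n + b * y) (N : ℤ) :
    ∃ p q, N ≤ p ∧ N ≤ q ∧ m + a * p = n + b * q := by
  set t := |x| + |y| + |N|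
  have ht : 0 ≤ t := by positivity
  refine ⟨x + t * b, y + t * a, ?_, ?_, by linear_combination h⟩
  · nlinarith [neg_abs_le x, le_abs_self N, abs_nonneg y]
  · nlinarith [neg_abs_le y, le_abs_self N, abs_nonneg x]

theorem stmt7_general (m n a b : ℕ)
    (ha : 0 < a) (hb : 0 < b) :
    (∃ k : ℕ, (∃ p ∈ Pset, k = m + a * p) ∧ (∃ p ∈ Pset, k = n + b * p)) ↔
      (Nat.gcd a b : ℤ) ∣ (m : ℤ) - (n : ℤ) := by
  rw [← Int.gcd_natCast_natCast, Int.coe_gcd, gcd_dvd_sub_iff_exists_add_mul_eq]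
  constructor
  · rintro ⟨k, ⟨p, -, rfl⟩, ⟨q, -, hq⟩⟩
    exact ⟨p, q, by exact_mod_cast hq⟩
  · rintro ⟨x, y, h⟩
    obtain ⟨p, q, hp, hq, hpq⟩ :=
      Int.exists_le_add_mul_eq_add_mul (by exact_mod_cast ha) (by exact_mod_cast hb) h 2
    lift p to ℕ using by omega
    lift q to ℕ using by omega
    exact ⟨m + a * p, ⟨p, Or.inr (by omega), rfl⟩, ⟨q, Or.inr (by omega), by exact_mod_cast hpq⟩⟩

/-- (m + aP) ∩ (n + bP) is nonempty iff gcd(a,b) ∣ m - n (in ℤ). -/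
theorem stmt7 (m n a b : ℕ) (hm : m ∈ Pset) (hn : n ∈ Pset)
    (ha : 0 < a) (hb : 0 < b) :
    (∃ k : ℕ, (∃ p ∈ Pset, k = m + a * p) ∧ (∃ p ∈ Pset, k = n + b * p)) ↔
      (Nat.gcd a b : ℤ) ∣ (m : ℤ) - (n : ℤ) :=
  stmt7_general m n a b ha hb
end

section
/- The elements (5,7) and (2,3) of P ⋊ ℕ× have common upper bounds in the left-invariant partial order but have no least common upper bound; in particular both (26,21) and (47,21) are minimal common upper bounds and they are incomparable. -/
def valid (p : ℕ × ℕ) : Prop := p.1 ∈ Pset ∧ 0 < p.2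

/-- (m,a) ≤ (k,c) iff k ∈ m + aP and a ∣ c -/
def le' (p q : ℕ × ℕ) : Prop := (∃ c ∈ Pset, q.1 = p.1 + p.2 * c) ∧ p.2 ∣ q.2

/-- common upper bound of (5,7) and (2,3) -/
def cub (u : ℕ × ℕ) : Prop := le' (5, 7) u ∧ le' (2, 3) u

lemma mem_Pset_iff {n : ℕ} : n ∈ Pset ↔ n ≠ 1 := by
  simp only [Pset, Set.mem_ofPred_eq]
  omega

lemma le'_iff {m a k c : ℕ} : le' (m, a) (k, c) ↔ (∃ x ≠ 1, k = m + a * x) ∧ a ∣ c := by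
  simp only [le', mem_Pset_iff]

lemma cub_iff {m a : ℕ} :
    cub (m, a) ↔ (∃ p ≠ 1, m = 5 + 7 * p) ∧ (∃ q ≠ 1, m = 2 + 3 * q) ∧ 21 ∣ a := by
  simp only [cub, le'_iff]
  constructor
  · rintro ⟨⟨hp, h7⟩, hq, h3⟩
    exact ⟨hp, hq, Nat.Coprime.mul_dvd_of_dvd_of_dvd (by norm_num) h7 h3⟩
  · rintro ⟨hp, hq, h21⟩
    exact ⟨⟨hp, (Nat.dvd_mul_right 7 3).trans h21⟩, hq, (Nat.dvd_mul_left 3 7).trans h21⟩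

lemma cub_26_21 : cub (26, 21) :=
  cub_iff.2 ⟨⟨3, by norm_num⟩, ⟨8, by norm_num⟩, dvd_rfl⟩

lemma cub_47_21 : cub (47, 21) :=
  cub_iff.2 ⟨⟨6, by norm_num⟩, ⟨15, by norm_num⟩, dvd_rfl⟩

/-- The bound `68` is sharp: `(26, 21) ≤ (68, 21)`. -/
lemma eq_of_cub_of_le' {w : ℕ × ℕ} {k : ℕ} (hk : k < 68) (hw : cub w) (hle : le' w (k, 21)) :
    w = (k, 21) := by
  obtain ⟨m, a⟩ := w
  obtain ⟨⟨p, hp, hmp⟩, ⟨q, hq, hmq⟩, h21⟩ := cub_iff.1 hw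
  obtain ⟨⟨x, hx, hkx⟩, ha⟩ := le'_iff.1 hle
  obtain rfl : a = 21 := Nat.dvd_antisymm ha h21
  simp only [Prod.mk.injEq, and_true]
  omega

lemma not_le'_26_21_47_21 : ¬ le' (26, 21) (47, 21) := by
  rintro ⟨⟨x, hx, h⟩, -⟩
  rw [mem_Pset_iff] at hx
  omega

lemma not_le'_47_21_26_21 : ¬ le' (47, 21) (26, 21) := by
  rintro ⟨⟨x, -, h⟩, -⟩
  omega

/-- (5,7) and (2,3) have common upper bounds in P ⋊ ℕ× but no least common
upper bound; both (26,21) and (47,21) are minimal common upper bounds and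
they are incomparable. -/
theorem stmt11 :
    (∃ u : ℕ × ℕ, valid u ∧ cub u) ∧
    (¬ ∃ u : ℕ × ℕ, valid u ∧ cub u ∧ ∀ w : ℕ × ℕ, valid w → cub w → le' u w) ∧
    (cub (26, 21) ∧ cub (47, 21)) ∧
    (∀ w : ℕ × ℕ, valid w → cub w → le' w (26, 21) → w = (26, 21)) ∧
    (∀ w : ℕ × ℕ, valid w → cub w → le' w (47, 21) → w = (47, 21)) ∧
    (¬ le' (26, 21) (47, 21) ∧ ¬ le' (47, 21) (26, 21)) := by
  have valid_26 : valid (26, 21) := ⟨mem_Pset_iff.2 (by norm_num), by norm_num⟩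
  have valid_47 : valid (47, 21) := ⟨mem_Pset_iff.2 (by norm_num), by norm_num⟩
  have min_26 (w : ℕ × ℕ) (_ : valid w) : cub w → le' w (26, 21) → w = (26, 21) :=
    eq_of_cub_of_le' (by norm_num)
  have min_47 (w : ℕ × ℕ) (_ : valid w) : cub w → le' w (47, 21) → w = (47, 21) :=
    eq_of_cub_of_le' (by norm_num)
  refine ⟨⟨_, valid_26, cub_26_21⟩, ?_, ⟨cub_26_21, cub_47_21⟩, min_26, min_47,
    not_le'_26_21_47_21, not_le'_47_21_26_21⟩
  rintro ⟨u, hu, hub, hleast⟩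
  have h26 := min_26 u hu hub (hleast _ valid_26 cub_26_21)
  have h47 := min_47 u hu hub (hleast _ valid_47 cub_47_21)
  simp [h26] at h47
end

section
/- If (m,a) and (n,b) in P ⋊ ℕ× have a common upper bound, then (m,a) ⋓ (n,b) = (ℓ, lcm(a,b)), where ℓ is the smallest element of (m + aP) ∩ (n + bP); that is, (ℓ, lcm(a,b)) is a common upper bound of (m,a) and (n,b) and its second coordinate divides the second coordinate of every common upper bound. -/
theorem lcm_dvd_of_le'_of_le' {m n a b k c : ℕ} (hm : le' (m, a) (k, c))
    (hn : le' (n, b) (k, c)) : Nat.lcm a b ∣ c :=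
  Nat.lcm_dvd hm.2 hn.2

theorem stmt13_general (m n a b : ℕ)
    (h : ∃ u : ℕ × ℕ, valid u ∧ le' (m, a) u ∧ le' (n, b) u) :
    le' (m, a) (sInf {x : ℕ | (∃ p ∈ Pset, x = m + a * p) ∧ ∃ p ∈ Pset, x = n + b * p},
        Nat.lcm a b) ∧
    le' (n, b) (sInf {x : ℕ | (∃ p ∈ Pset, x = m + a * p) ∧ ∃ p ∈ Pset, x = n + b * p},
        Nat.lcm a b) ∧
    ∀ k c : ℕ, le' (m, a) (k, c) → le' (n, b) (k, c) → Nat.lcm a b ∣ c := by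
  obtain ⟨u, -, hmu, hnu⟩ := h
  set S := {x : ℕ | (∃ p ∈ Pset, x = m + a * p) ∧ ∃ p ∈ Pset, x = n + b * p}
  obtain ⟨hℓm, hℓn⟩ : sInf S ∈ S := Nat.sInf_mem ⟨u.1, hmu.1, hnu.1⟩
  exact ⟨⟨hℓm, Nat.dvd_lcm_left a b⟩, ⟨hℓn, Nat.dvd_lcm_right a b⟩,
    fun _ _ => lcm_dvd_of_le'_of_le'⟩

/-- If (m,a) and (n,b) have a common upper bound, then (ℓ, lcm(a,b)) is a
common upper bound, where ℓ is the smallest element of (m+aP) ∩ (n+bP), and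
the second coordinate of any common upper bound is divisible by lcm(a,b). -/
theorem stmt13 (m n a b : ℕ) (hm : m ∈ Pset) (hn : n ∈ Pset)
    (ha : 0 < a) (hb : 0 < b)
    (h : ∃ u : ℕ × ℕ, valid u ∧ le' (m, a) u ∧ le' (n, b) u) :
    le' (m, a) (sInf {x : ℕ | (∃ p ∈ Pset, x = m + a * p) ∧ ∃ p ∈ Pset, x = n + b * p},
        Nat.lcm a b) ∧
    le' (n, b) (sInf {x : ℕ | (∃ p ∈ Pset, x = m + a * p) ∧ ∃ p ∈ Pset, x = n + b * p},
        Nat.lcm a b) ∧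
    ∀ k c : ℕ, le' (m, a) (k, c) → le' (n, b) (k, c) → Nat.lcm a b ∣ c :=
  stmt13_general m n a b h
end

section
/- In any C*-algebra (or ring) with elements s, t satisfying t² = s³, st = ts, s*t = ts*, t*s = st*, and s*s = t*t = 1: for any integers k₁, k₂ and any representations k₁ = k₁' + 3u, k₂ = k₂' - 2u (u ∈ ℤ), one has s^((k₁)) t^((k₂)) = s^((k₁')) t^((k₂')), where x^((k)) denotes x^k for k ≥ 0 and (x*)^(-k) for k < 0. -/
/-!
Write `x^((k))` for the signed power `starZPow x k`. An isometry `x` satisfies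
`x^((a + n)) = x^((a)) x^n` for every integer `a` and natural `n`, because `x* x = 1` cancels the
negative part. Hence
`s^((a + 3m)) t^((b - 2m)) = s^((a)) s^(3m) t^((b - 2m)) = s^((a)) t^(2m) t^((b - 2m))`, and `t^(2m)`
may be moved past `t^((b - 2m))`: it commutes with `t` and, being `s^(3m)`, with `t*`. What is left
is `s^((a)) t^((b))`. Negative shifts follow by exchanging the two representations.
-/

def starZPow {R : Type*} [Monoid R] [Star R] (x : R) (k : ℤ) : R :=
  if 0 ≤ k then x ^ k.toNat else star x ^ (-k).toNat

section StarZPow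

variable {R : Type*} [Monoid R] [Star R] {x y : R}

@[simp]
theorem starZPow_natCast (x : R) (n : ℕ) : starZPow x n = x ^ n := by
  simp [starZPow]

@[simp]
theorem starZPow_neg_natCast (x : R) (n : ℕ) : starZPow x (-n) = star x ^ n := by
  unfold starZPow
  rcases n.eq_zero_or_pos with rfl | hn
  · simp
  · rw [if_neg (by omega), neg_neg, Int.toNat_natCast]

theorem starZPow_add_one (hx : star x * x = 1) (a : ℤ) :
    starZPow x (a + 1) = starZPow x a * x := by
  obtain ⟨n, rfl | rfl⟩ := Int.eq_nat_or_neg a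
  · rw [← Nat.cast_add_one, starZPow_natCast, starZPow_natCast, pow_succ]
  · cases n with
    | zero => simp [starZPow]
    | succ n => rw [show -((n + 1 : ℕ) : ℤ) + 1 = -n by push_cast; ring, starZPow_neg_natCast,
        starZPow_neg_natCast, pow_succ, mul_assoc, hx, mul_one]

theorem starZPow_add_natCast (hx : star x * x = 1) (a : ℤ) (n : ℕ) :
    starZPow x (a + n) = starZPow x a * x ^ n := by
  induction n with
  | zero => simp
  | succ n ih => rw [Nat.cast_succ, ← add_assoc, starZPow_add_one hx, ih, pow_succ, mul_assoc]

theorem Commute.starZPow_right (h : Commute y x) (h' : Commute y (star x)) (k : ℤ) :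
    Commute y (starZPow x k) := by
  unfold starZPow
  split_ifs
  exacts [h.pow_right _, h'.pow_right _]

end StarZPow

theorem starZPow_mul_starZPow_shift {R : Type*} [Monoid R] [Star R] {s t : R}
    (hs : star s * s = 1) (ht : star t * t = 1) {p q : ℕ} (hpq : s ^ p = t ^ q)
    (hst : Commute (star t) s) (a b : ℤ) (m : ℕ) :
    starZPow s (a + ↑(p * m)) * starZPow t (b - ↑(q * m)) = starZPow s a * starZPow t b := by
  have hc : Commute (t ^ (q * m)) (starZPow t (b - ↑(q * m))) := by
    refine Commute.starZPow_right ((Commute.refl t).pow_left _) ?_ _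
    rw [pow_mul, ← hpq, ← pow_mul]
    exact (hst.pow_right _).symm
  calc starZPow s (a + ↑(p * m)) * starZPow t (b - ↑(q * m))
      = starZPow s a * (t ^ (q * m) * starZPow t (b - ↑(q * m))) := by
        rw [starZPow_add_natCast hs, pow_mul, hpq, ← pow_mul, mul_assoc]
    _ = starZPow s a * starZPow t b := by
        rw [hc.eq, ← starZPow_add_natCast ht, sub_add_cancel]

theorem stmt14_general {R : Type*} [Ring R] [StarRing R] (s t : R)
    (hs : star s * s = 1) (ht : star t * t = 1)
    (hR1 : t ^ 2 = s ^ 3) (hR2'' : star t * s = s * star t)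
    (pw : R → ℤ → R)
    (hpw : ∀ (x : R) (k : ℤ), pw x k = if 0 ≤ k then x ^ k.toNat else (star x) ^ (-k).toNat)
    (k₁ k₂ k₁' k₂' u : ℤ) (h₁ : k₁ = k₁' + 3 * u) (h₂ : k₂ = k₂' - 2 * u) :
    pw s k₁ * pw t k₂ = pw s k₁' * pw t k₂' := by
  have hpw : pw = starZPow := funext fun x => funext (hpw x)
  have shift := starZPow_mul_starZPow_shift (p := 3) (q := 2) hs ht hR1.symm hR2''
  subst hpw h₁ h₂
  obtain ⟨m, rfl | rfl⟩ := Int.eq_nat_or_neg u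
  · simpa using shift k₁' k₂' m
  · rw [← shift]
    congr 2 <;> push_cast <;> ring

/-- In a unital *-ring with isometries s, t satisfying t² = s³, st = ts,
s*t = ts*, t*s = st*: for integers k₁ = k₁' + 3u and k₂ = k₂' - 2u one has
s^((k₁)) t^((k₂)) = s^((k₁')) t^((k₂')), where x^((k)) = x^k for k ≥ 0 and
(x*)^(-k) for k < 0. -/
theorem stmt14 {R : Type*} [Ring R] [StarRing R] (s t : R)
    (hs : star s * s = 1) (ht : star t * t = 1)
    (hR1 : t ^ 2 = s ^ 3) (hR2 : s * t = t * s)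
    (hR2' : star s * t = t * star s) (hR2'' : star t * s = s * star t)
    (pw : R → ℤ → R)
    (hpw : ∀ (x : R) (k : ℤ), pw x k = if 0 ≤ k then x ^ k.toNat else (star x) ^ (-k).toNat)
    (k₁ k₂ k₁' k₂' u : ℤ) (h₁ : k₁ = k₁' + 3 * u) (h₂ : k₂ = k₂' - 2 * u) :
    pw s k₁ * pw t k₂ = pw s k₁' * pw t k₂' :=
  stmt14_general s t hs ht hR1 hR2'' pw hpw k₁ k₂ k₁' k₂' u h₁ h₂
end

section
/- Let s, t, v_p (p prime) be isometries in a C*-algebra satisfying relations (R1) t² = s³; (R2) st=ts, s*t=ts*, t*s=st*; (T1) v_p s = s^p v_p, v_p t = t^p v_p, v_p s* = s*^p v_p, v_p t* = t*^p v_p; and (T4) s* v_p = s^{p-1} v_p s*. Then for all a ∈ ℕ× with v_a := ∏_p v_p^{e_p(a)} (e_p(a) = p-adic valuation of a), one has s* v_a = s^{a-1} v_a s*. -/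
/-!
Write `x` for `s*`. Call `w` *of degree `a`* when `x w = s^(a-1) w x`. If `w` has degree `a` and
moreover `w s = s^a w`, then for any `w'` of degree `b ≥ 1` the product `w w'` has degree `a b`,
since `w s^(b-1) = s^(a(b-1)) w` and `(a - 1) + a (b - 1) = a b - 1`. By (T1) and (T4) each `v_p`
has degree `p`, so inducting along the prime factorisation of `a` gives that `v_a` has degree `a`.
-/

section Monoid

variable {M : Type*} [Monoid M] {s x : M}

theorem mul_mul_eq_pow_mul_mul_mul {w w' : M} {a b : ℕ} (hws : w * s = s ^ a * w)
    (hxw : x * w = s ^ (a - 1) * w * x) (hxw' : x * w' = s ^ (b - 1) * w' * x) (hb : 0 < b) :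
    x * (w * w') = s ^ (a * b - 1) * (w * w') * x := by
  have hpow : w * s ^ (b - 1) = s ^ (a * (b - 1)) * w := by
    rw [pow_mul]
    exact SemiconjBy.pow_right hws (b - 1)
  have hexp : a * b - 1 = (a - 1) + a * (b - 1) := by
    obtain ⟨c, rfl⟩ := Nat.exists_eq_add_of_lt hb
    cases a <;> simp [Nat.mul_succ, add_comm]
  calc x * (w * w') = s ^ (a - 1) * (w * s ^ (b - 1)) * w' * x := by
        simp only [← mul_assoc, hxw]; simp only [mul_assoc, hxw']
    _ = s ^ (a * b - 1) * (w * w') * x := by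
        rw [hpow, hexp, pow_add]; simp only [mul_assoc]

theorem mul_list_prod_map_eq_pow_mul_mul (v : ℕ → M) (L : List ℕ)
    (hL : ∀ p ∈ L, 0 < p ∧ v p * s = s ^ p * v p ∧ x * v p = s ^ (p - 1) * v p * x) :
    x * (L.map v).prod = s ^ (L.prod - 1) * (L.map v).prod * x := by
  induction L with
  | nil => simp
  | cons p L ih =>
    obtain ⟨-, hps, hxp⟩ := hL p List.mem_cons_self
    have hL' := fun q hq => hL q (List.mem_cons_of_mem p hq)
    have hpos : 0 < L.prod := List.prod_pos fun q hq => (hL' q hq).1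
    simpa only [List.map_cons, List.prod_cons] using
      mul_mul_eq_pow_mul_mul_mul hps hxp (ih hL') hpos

end Monoid

theorem stmt15_general {A : Type*} [Ring A] [StarRing A] (s : A) (v : ℕ → A)
    (hT1s : ∀ p : ℕ, p.Prime → v p * s = s ^ p * v p)
    (hT4 : ∀ p : ℕ, p.Prime → star s * v p = s ^ (p - 1) * v p * star s)
    (V : ℕ → A) (hV : ∀ a : ℕ, V a = ((a.primeFactorsList).map v).prod) :
    ∀ a : ℕ, 0 < a → star s * V a = s ^ (a - 1) * V a * star s := by
  intro a ha
  have hfactors := mul_list_prod_map_eq_pow_mul_mul (x := star s) v a.primeFactorsList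
    fun p hp => have hp := Nat.prime_of_mem_primeFactorsList hp; ⟨hp.pos, hT1s p hp, hT4 p hp⟩
  rwa [Nat.prod_primeFactorsList ha.ne', ← hV] at hfactors

/-- If s, t, v_p (p prime) are isometries satisfying (R1), (R2), (T1), (T2),
and (T4) s* v_p = s^{p-1} v_p s*, then for all a ∈ ℕ× the isometry
v_a = ∏_p v_p^{e_p(a)} satisfies s* v_a = s^{a-1} v_a s*. -/
theorem stmt15 {A : Type*} [Ring A] [StarRing A] (s t : A) (v : ℕ → A)
    (hs : star s * s = 1) (ht : star t * t = 1)
    (hv : ∀ p : ℕ, p.Prime → star (v p) * v p = 1)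
    (hR1 : t ^ 2 = s ^ 3) (hR2 : s * t = t * s)
    (hR2' : star s * t = t * star s) (hR2'' : star t * s = s * star t)
    (hT1s : ∀ p : ℕ, p.Prime → v p * s = s ^ p * v p)
    (hT1t : ∀ p : ℕ, p.Prime → v p * t = t ^ p * v p)
    (hT1s' : ∀ p : ℕ, p.Prime → v p * star s = (star s) ^ p * v p)
    (hT1t' : ∀ p : ℕ, p.Prime → v p * star t = (star t) ^ p * v p)
    (hT2 : ∀ p q : ℕ, p.Prime → q.Prime → v p * v q = v q * v p)
    (hT4 : ∀ p : ℕ, p.Prime → star s * v p = s ^ (p - 1) * v p * star s)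
    (V : ℕ → A) (hV : ∀ a : ℕ, V a = ((a.primeFactorsList).map v).prod) :
    ∀ a : ℕ, 0 < a → star s * V a = s ^ (a - 1) * V a * star s :=
  stmt15_general s v hT1s hT4 V hV
end

section
/- Let s, t be isometries with t² = s³, st = ts, and v an isometry with v s = s^a v, v t = t^a v for a positive integer a. Then the map X : P ⋊ ℕ× → B(H) given on (m, a) with m = 2x + 3y (x, y ∈ ℕ) by X_{(m,a)} = s^x t^y v_a is a well-defined isometric monoid homomorphism: X_{(m,a)} is an isometry, X_{(0,1)} = 1, and X_{(m,a)(n,b)} = X_{(m,a)} X_{(n,b)}. -/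
/-! Since `t² = s³`, trading three factors `s` for two factors `t` moves between any two
decompositions `m = 2x + 3y`, so `s ^ x * t ^ y` depends only on `m`. Isometries form a
submonoid, and the relations `v_a s = s^a v_a`, `v_a t = t^a v_a` let `v_a` pass through
`s ^ x' * t ^ y'`, multiplying the exponents by `a`. -/

def isometrySubmonoid (M : Type*) [Monoid M] [StarMul M] : Submonoid M where
  carrier := {a | star a * a = 1}
  one_mem' := by simp
  mul_mem' {a b} (ha : star a * a = 1) (hb : star b * b = 1) :=
    show star (a * b) * (a * b) = 1 by
      rw [star_mul, mul_assoc, ← mul_assoc (star a), ha, one_mul, hb]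

theorem pow_add_three_mul_mul_pow_of_sq_eq_cube {M : Type*} [Monoid M] {s t : M}
    (h : t ^ 2 = s ^ 3) (x y k : ℕ) :
    s ^ (x + 3 * k) * t ^ y = s ^ x * t ^ (y + 2 * k) := by
  rw [pow_add, pow_mul, ← h, ← pow_mul, mul_assoc, ← pow_add, add_comm (2 * k)]

theorem pow_mul_pow_eq_of_sq_eq_cube {M : Type*} [Monoid M] {s t : M}
    (h : t ^ 2 = s ^ 3) {x y x' y' : ℕ} (hm : 2 * x + 3 * y = 2 * x' + 3 * y') :
    s ^ x * t ^ y = s ^ x' * t ^ y' := by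
  rcases le_total y y' with hy | hy
  · obtain ⟨k, rfl, rfl⟩ : ∃ k, y' = y + 2 * k ∧ x = x' + 3 * k :=
      ⟨(y' - y) / 2, by omega, by omega⟩
    exact pow_add_three_mul_mul_pow_of_sq_eq_cube h x' y k
  · obtain ⟨k, rfl, rfl⟩ : ∃ k, y = y' + 2 * k ∧ x' = x + 3 * k :=
      ⟨(y - y') / 2, by omega, by omega⟩
    exact (pow_add_three_mul_mul_pow_of_sq_eq_cube h x y' k).symm

theorem pow_mul_pow_mul_mul_pow_mul_pow {M : Type*} [Monoid M] {s t w : M} {a : ℕ}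
    (hst : Commute s t) (hs : SemiconjBy w s (s ^ a)) (ht : SemiconjBy w t (t ^ a))
    (x y x' y' : ℕ) :
    s ^ x * t ^ y * w * (s ^ x' * t ^ y') = s ^ (x + a * x') * t ^ (y + a * y') * w := by
  have hw : w * (s ^ x' * t ^ y') = s ^ (a * x') * t ^ (a * y') * w := by
    simpa only [← pow_mul] using ((hs.pow_right x').mul_right (ht.pow_right y')).eq
  rw [mul_assoc, hw, pow_add, pow_add]
  simp only [mul_assoc]
  rw [← mul_assoc (t ^ y), ((hst.pow_pow _ _).symm).eq, mul_assoc]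

/-- The formula X_{(m,a)} = s^x t^y v_a (m = 2x + 3y) gives a well-defined
isometric monoid homomorphism of P ⋊ ℕ×: the value does not depend on the
decomposition m = 2x + 3y, each X_{(m,a)} is an isometry, X_{(0,1)} = 1, and
X_{(m,a)(n,b)} = X_{(m,a)} X_{(n,b)}. -/
theorem stmt16 {A : Type*} [Ring A] [StarRing A] (s t : A) (v : ℕ → A)
    (hs : star s * s = 1) (ht : star t * t = 1)
    (hv : ∀ a : ℕ, 0 < a → star (v a) * v a = 1)
    (hR1 : t ^ 2 = s ^ 3) (hR2 : s * t = t * s)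
    (hvmul : ∀ a b : ℕ, 0 < a → 0 < b → v a * v b = v (a * b))
    (hv1 : v 1 = 1)
    (hvs : ∀ a : ℕ, 0 < a → v a * s = s ^ a * v a)
    (hvt : ∀ a : ℕ, 0 < a → v a * t = t ^ a * v a) :
    (∀ x y x' y' : ℕ, 2 * x + 3 * y = 2 * x' + 3 * y' →
      s ^ x * t ^ y = s ^ x' * t ^ y') ∧
    (∀ (x y a : ℕ), 0 < a →
      star (s ^ x * t ^ y * v a) * (s ^ x * t ^ y * v a) = 1) ∧
    (s ^ 0 * t ^ 0 * v 1 = 1) ∧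
    (∀ (x y x' y' a b : ℕ), 0 < a → 0 < b →
      s ^ (x + a * x') * t ^ (y + a * y') * v (a * b)
        = (s ^ x * t ^ y * v a) * (s ^ x' * t ^ y' * v b)) := by
  refine ⟨fun x y x' y' => pow_mul_pow_eq_of_sq_eq_cube hR1, ?_, by simp [hv1], ?_⟩
  · intro x y a ha
    have hs' : s ∈ isometrySubmonoid A := hs
    have ht' : t ∈ isometrySubmonoid A := ht
    exact mul_mem (mul_mem (pow_mem hs' x) (pow_mem ht' y)) (hv a ha)
  · intro x y x' y' a b ha hb
    rw [← hvmul a b ha hb, ← mul_assoc, ← mul_assoc _ (s ^ x' * t ^ y'),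
      pow_mul_pow_mul_mul_pow_mul_pow hR2 (hvs a ha) (hvt a ha), mul_assoc]
end
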